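/- Let E(K, μ) = 9Kμ/(3K + μ) be Young's modulus as a function of bulk and shear moduli. For the dry porous mortar with K*(φ) = 4K_m μ_m(1−φ)/(4μ_m + 3K_m φ) and μ*(φ) = μ_m(1−φ²), the effective Young's modulus E(K*(φ), μ*(φ)) is strictly decreasing in φ on (0,1) and tends to 0 as φ → 1⁻. -/
import Mathlib


theorem stmt_16 (Km μm : ℝ) (hKm : 0 < Km) (hμm : 0 < μm) :
    let K : ℝ → ℝ := fun φ => 4 * Km * μm * (1 - φ) / (4 * μm + 3 * Km * φ)
    let μ : ℝ → ℝ := fun φ => μm * (1 - φ ^ 2)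
    let E : ℝ → ℝ := fun φ => 9 * K φ * μ φ / (3 * K φ + μ φ)
    StrictAntiOn E (Set.Ioo 0 1) ∧
    Filter.Tendsto E (nhdsWithin 1 (Set.Ioo (0 : ℝ) 1)) (nhds 0) := by
  intro K μ E
  set f : ℝ → ℝ := fun φ =>
    36 * Km * μm * (1 - φ ^ 2) / (3 * Km * φ ^ 2 + (4 * μm + 3 * Km) * φ + 12 * Km + 4 * μm)
    with hf
  have hden : ∀ φ : ℝ, 0 ≤ φ →
      0 < 3 * Km * φ ^ 2 + (4 * μm + 3 * Km) * φ + 12 * Km + 4 * μm := by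
    intro φ hφ; positivity
  have hE : ∀ φ ∈ Set.Ioo (0:ℝ) 1, E φ = f φ := by
    rintro φ ⟨h0, h1⟩
    have hd1 : (0:ℝ) < 4 * μm + 3 * Km * φ := by positivity
    have h1φ : (0:ℝ) < 1 - φ := by linarith
    have h1φ2 : (0:ℝ) < 1 - φ ^ 2 := by nlinarith
    have hsum : 0 < 3 * (4 * Km * μm * (1 - φ) / (4 * μm + 3 * Km * φ)) + μm * (1 - φ ^ 2) := by
      positivity
    have hD := hden φ h0.le
    show 9 * K φ * μ φ / (3 * K φ + μ φ) = f φ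
    simp only [K, μ, hf]
    rw [div_eq_div_iff (by linarith [hsum]) (ne_of_gt hD)]
    field_simp
    ring
  constructor
  · intro a ha b hb hab
    rw [hE a ha, hE b hb]
    obtain ⟨ha0, ha1⟩ := ha
    obtain ⟨hb0, hb1⟩ := hb
    have hDa := hden a ha0.le
    have hDb := hden b hb0.le
    rw [div_lt_div_iff₀ hDb hDa]
    have hNa : (0:ℝ) < 1 - a ^ 2 := by nlinarith
    have hNb : (0:ℝ) < 1 - b ^ 2 := by nlinarith
    have hDab : 3 * Km * a ^ 2 + (4 * μm + 3 * Km) * a + 12 * Km + 4 * μm <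
        3 * Km * b ^ 2 + (4 * μm + 3 * Km) * b + 12 * Km + 4 * μm := by
      nlinarith [mul_pos hKm (mul_pos (sub_pos.mpr hab) (add_pos ha0 hb0))]
    have h1 : (1 - b ^ 2) * (3 * Km * a ^ 2 + (4 * μm + 3 * Km) * a + 12 * Km + 4 * μm) <
        (1 - a ^ 2) * (3 * Km * a ^ 2 + (4 * μm + 3 * Km) * a + 12 * Km + 4 * μm) :=
      mul_lt_mul_of_pos_right (by nlinarith) hDa
    have h2 : (1 - a ^ 2) * (3 * Km * a ^ 2 + (4 * μm + 3 * Km) * a + 12 * Km + 4 * μm) <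
        (1 - a ^ 2) * (3 * Km * b ^ 2 + (4 * μm + 3 * Km) * b + 12 * Km + 4 * μm) :=
      mul_lt_mul_of_pos_left hDab hNa
    nlinarith [mul_pos hKm hμm]
  · have hD1 : (3 * Km * (1:ℝ) ^ 2 + (4 * μm + 3 * Km) * 1 + 12 * Km + 4 * μm) ≠ 0 := by
      positivity
    have hcont : ContinuousAt f 1 := by
      apply ContinuousAt.div
      · fun_prop
      · fun_prop
      · exact hD1
    have hval : f 1 = 0 := by simp [hf]
    have htends : Filter.Tendsto f (nhdsWithin 1 (Set.Ioo (0:ℝ) 1)) (nhds 0) := by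
      rw [← hval]
      exact (hcont.tendsto).mono_left nhdsWithin_le_nhds
    refine htends.congr' ?_
    filter_upwards [eventually_mem_nhdsWithin] with x hx
    exact (hE x hx).symm
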